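/- arXiv:2209.01184 — 3 statements merged into one kernel-verified Lean document; each statement's English description precedes it below -/
import Mathlib

section
/- Let α ∈ (1,2), c ∈ (0,1), a = cos(απ), and define β(a,c) = (1/π)·arccos( (c²(1−a²) − (1+ac)²) / (c²(1−a²) + (1+ac)²) ). Then β(a,c) ∈ (α−1, 1). -/
/-!
With `a = cos (απ)` we have `β = arccos x / π`, where `x = fournierCos a c`. Since `arccos` is strictly
decreasing from `π` to `0` on `[-1, 1]` and `cos ((α-1)π) = -a`, the claim amounts to `-1 < x < -a`.
Both are sign conditions on polynomials: `x + 1` has the sign of `2c²(1-a²) > 0`, and `x + a` has the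
sign of `(1-a)(c-1)(1+c+2ac) < 0`.
-/

open Real

noncomputable def fournierCos (a c : ℝ) : ℝ :=
  (c ^ 2 * (1 - a ^ 2) - (1 + a * c) ^ 2) / (c ^ 2 * (1 - a ^ 2) + (1 + a * c) ^ 2)

lemma abs_cos_mul_pi_lt_one {α : ℝ} (hα : ∀ n : ℤ, (n : ℝ) ≠ α) : |cos (α * π)| < 1 := by
  have hsin : sin (α * π) ≠ 0 :=
    sin_ne_zero_iff.2 fun n h => hα n (mul_right_cancel₀ pi_ne_zero h)
  rw [← sq_lt_one_iff_abs_lt_one, cos_sq']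
  linarith [sq_pos_of_ne_zero hsin]

section FournierCos

variable {a c : ℝ}

lemma neg_one_lt_fournierCos (ha : |a| < 1) (hc : c ≠ 0) : -1 < fournierCos a c := by
  have hs : 0 < c ^ 2 * (1 - a ^ 2) :=
    mul_pos (sq_pos_of_ne_zero hc) (sub_pos.2 ((sq_lt_one_iff_abs_lt_one a).2 ha))
  rw [fournierCos, lt_div_iff₀ (by positivity)]
  linarith

lemma fournierCos_lt_neg (ha : |a| < 1) (hc₀ : 0 < c) (hc₁ : c < 1) : fournierCos a c < -a := by
  obtain ⟨ha₁, ha₂⟩ := abs_lt.1 ha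
  have hD : 0 < c ^ 2 * (1 - a ^ 2) + (1 + a * c) ^ 2 := by
    have : 0 < 1 + a * c := by nlinarith
    nlinarith [sq_nonneg c]
  have key : (c ^ 2 * (1 - a ^ 2) - (1 + a * c) ^ 2) + a * (c ^ 2 * (1 - a ^ 2) + (1 + a * c) ^ 2)
      = -((1 - a) * (1 - c) * (1 + c + 2 * a * c)) := by ring
  have hpos : 0 < (1 - a) * (1 - c) * (1 + c + 2 * a * c) :=
    mul_pos (mul_pos (by linarith) (by linarith)) (by nlinarith)
  rw [fournierCos, div_lt_iff₀ hD]
  linarith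

end FournierCos

lemma lt_arccos_of_lt_cos {t x : ℝ} (ht₀ : 0 ≤ t) (htπ : t ≤ π) (hx : -1 ≤ x) (hxt : x < cos t) :
    t < arccos x := by
  simpa only [arccos_cos ht₀ htπ] using arccos_lt_arccos hx hxt (cos_le_one t)

theorem stmt_12 (α c : ℝ) (hα : 1 < α) (hα2 : α < 2) (hc0 : 0 < c) (hc1 : c < 1) :
    α - 1 <
        (1 / Real.pi) * Real.arccos
          ((c ^ 2 * (1 - Real.cos (α * Real.pi) ^ 2) - (1 + Real.cos (α * Real.pi) * c) ^ 2) /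
            (c ^ 2 * (1 - Real.cos (α * Real.pi) ^ 2) + (1 + Real.cos (α * Real.pi) * c) ^ 2)) ∧
      (1 / Real.pi) * Real.arccos
          ((c ^ 2 * (1 - Real.cos (α * Real.pi) ^ 2) - (1 + Real.cos (α * Real.pi) * c) ^ 2) /
            (c ^ 2 * (1 - Real.cos (α * Real.pi) ^ 2) + (1 + Real.cos (α * Real.pi) * c) ^ 2)) <
        1 := by
  change α - 1 < 1 / π * arccos (fournierCos (cos (α * π)) c) ∧
    1 / π * arccos (fournierCos (cos (α * π)) c) < 1
  have hnotint : ∀ n : ℤ, (n : ℝ) ≠ α := by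
    rintro n rfl
    have h1 : (1 : ℤ) < n := by exact_mod_cast hα
    have h2 : n < 2 := by exact_mod_cast hα2
    omega
  have ha := abs_cos_mul_pi_lt_one hnotint
  have hlow := neg_one_lt_fournierCos ha hc0.ne'
  have hshift : cos ((α - 1) * π) = -cos (α * π) := by
    rw [sub_one_mul, cos_sub_pi]
  rw [one_div_mul_eq_div, lt_div_iff₀ pi_pos, div_lt_one pi_pos]
  refine ⟨lt_arccos_of_lt_cos ?_ ?_ hlow.le ?_, arccos_lt_pi.2 hlow⟩
  · nlinarith [pi_pos]
  · nlinarith [pi_pos]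
  · rw [hshift]
    exact fournierCos_lt_neg ha hc0 hc1
end

section
/- Let α ∈ (1,2), c ∈ (0,1), a = cos(απ), and β(a,c) as defined via arccos. Define h₊(γ) = c·sin(−απ) − sin(γπ) − c·sin((γ−α)π). Then h₊(0) = 0, h₊(γ) < 0 for γ ∈ (α−1, β(a,c)), and h₊(γ) ≥ 0 for γ ∈ [β(a,c), 1). -/
/-!
Write θ = γπ, A = -c sin(απ) and B = 1 + ac, both positive for α ∈ (1, 2), c ∈ (0, 1).
The subtraction formula for sin gives h₊(γ) = A (1 - cos θ) - B sin θ, and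
(B sin θ)² - (A (1 - cos θ))² = (1 - cos θ) ((A² + B²) cos θ - (A² - B²)).
Since A² = c² (1 - a²), βπ is the arccos of (A² - B²) / (A² + B²), so the last factor has the
sign of cos θ - cos βπ, which monotonicity of cos on [0, π] controls.
-/

open Real

theorem sq_mul_sin_sub_sq_mul_one_sub_cos (A B θ : ℝ) :
    (B * sin θ) ^ 2 - (A * (1 - cos θ)) ^ 2
      = (1 - cos θ) * ((A ^ 2 + B ^ 2) * cos θ - (A ^ 2 - B ^ 2)) := by
  linear_combination B ^ 2 * sin_sq_add_cos_sq θ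

section OneSubCosVersusSin

variable {A B θ : ℝ}

theorem mul_cos_arccos_div_sq_add_sq (hAB : 0 < A ^ 2 + B ^ 2) :
    (A ^ 2 + B ^ 2) * cos (arccos ((A ^ 2 - B ^ 2) / (A ^ 2 + B ^ 2))) = A ^ 2 - B ^ 2 := by
  rw [cos_arccos ((le_div_iff₀ hAB).2 (by nlinarith)) ((div_le_one hAB).2 (by nlinarith))]
  field_simp

theorem mul_one_sub_cos_lt_mul_sin_of_lt_arccos (hB : 0 ≤ B) (hAB : 0 < A ^ 2 + B ^ 2)
    (hθ₀ : 0 < θ) (hθ : θ < arccos ((A ^ 2 - B ^ 2) / (A ^ 2 + B ^ 2))) :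
    A * (1 - cos θ) < B * sin θ := by
  have hθπ : θ < π := hθ.trans_le (arccos_le_pi _)
  have hcos_one : cos θ < 1 := by
    simpa using cos_lt_cos_of_nonneg_of_le_pi le_rfl hθπ.le hθ₀
  have hcos : cos (arccos ((A ^ 2 - B ^ 2) / (A ^ 2 + B ^ 2))) < cos θ :=
    cos_lt_cos_of_nonneg_of_le_pi hθ₀.le (arccos_le_pi _) hθ
  have hsq : 0 < (B * sin θ) ^ 2 - (A * (1 - cos θ)) ^ 2 := by
    rw [sq_mul_sin_sub_sq_mul_one_sub_cos]
    exact mul_pos (by linarith)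
      (by linarith [mul_cos_arccos_div_sq_add_sq hAB, mul_lt_mul_of_pos_left hcos hAB])
  exact lt_of_pow_lt_pow_left₀ 2 (mul_nonneg hB (sin_pos_of_pos_of_lt_pi hθ₀ hθπ).le)
    (by linarith)

theorem mul_sin_le_mul_one_sub_cos_of_arccos_le (hA : 0 ≤ A) (hAB : 0 < A ^ 2 + B ^ 2)
    (hθ : arccos ((A ^ 2 - B ^ 2) / (A ^ 2 + B ^ 2)) ≤ θ) (hθπ : θ ≤ π) :
    B * sin θ ≤ A * (1 - cos θ) := by
  have hcos : cos θ ≤ cos (arccos ((A ^ 2 - B ^ 2) / (A ^ 2 + B ^ 2))) :=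
    cos_le_cos_of_nonneg_of_le_pi (arccos_nonneg _) hθπ hθ
  have hsq : (B * sin θ) ^ 2 - (A * (1 - cos θ)) ^ 2 ≤ 0 := by
    rw [sq_mul_sin_sub_sq_mul_one_sub_cos]
    exact mul_nonpos_of_nonneg_of_nonpos (by linarith [cos_le_one θ])
      (by linarith [mul_cos_arccos_div_sq_add_sq hAB, mul_le_mul_of_nonneg_left hcos hAB.le])
  exact (le_abs_self _).trans
    (abs_le_of_sq_le_sq (by linarith) (mul_nonneg hA (by linarith [cos_le_one θ])))

end OneSubCosVersusSin

theorem stmt_13 (α c : ℝ) (hα : 1 < α) (hα2 : α < 2) (hc0 : 0 < c) (hc1 : c < 1)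
    (a β : ℝ) (ha : a = Real.cos (α * Real.pi))
    (hβ : β = (1 / Real.pi) * Real.arccos
      ((c ^ 2 * (1 - a ^ 2) - (1 + a * c) ^ 2) / (c ^ 2 * (1 - a ^ 2) + (1 + a * c) ^ 2)))
    (hp : ℝ → ℝ)
    (hdef : ∀ γ, hp γ = c * Real.sin (-α * Real.pi) - Real.sin (γ * Real.pi) -
      c * Real.sin ((γ - α) * Real.pi)) :
    hp 0 = 0 ∧
      (∀ γ, α - 1 < γ → γ < β → hp γ < 0) ∧
      (∀ γ, β ≤ γ → γ < 1 → 0 ≤ hp γ) := by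
  subst ha
  have hsin : sin (α * π) < 0 := by
    rw [show α * π = (α - 1) * π + π by ring, sin_add_pi, neg_lt_zero]
    exact sin_pos_of_pos_of_lt_pi (by nlinarith [pi_pos]) (by nlinarith [pi_pos])
  set A := -(c * sin (α * π)) with hA_def
  set B := 1 + cos (α * π) * c
  have hA : 0 < A := by nlinarith
  have hB : 0 < B := by nlinarith [neg_one_le_cos (α * π)]
  have hA_sq : c ^ 2 * (1 - cos (α * π) ^ 2) = A ^ 2 := by
    rw [hA_def]
    linear_combination -c ^ 2 * sin_sq_add_cos_sq (α * π)
  have hAB : 0 < A ^ 2 + B ^ 2 := by positivity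
  have hβπ : β * π = arccos ((A ^ 2 - B ^ 2) / (A ^ 2 + B ^ 2)) := by
    rw [hβ, hA_sq]
    field_simp
  have hp_eq : ∀ γ, hp γ = A * (1 - cos (γ * π)) - B * sin (γ * π) := by
    intro γ
    rw [hdef, neg_mul, sin_neg, sub_mul, sin_sub]
    ring
  refine ⟨by simp [hp_eq], fun γ hγ hγβ => ?_, fun γ hβγ hγ => ?_⟩
  · rw [hp_eq, sub_neg]
    refine mul_one_sub_cos_lt_mul_sin_of_lt_arccos hB.le hAB (by nlinarith [pi_pos]) ?_
    exact hβπ ▸ mul_lt_mul_of_pos_right hγβ pi_pos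
  · rw [hp_eq, sub_nonneg]
    refine mul_sin_le_mul_one_sub_cos_of_arccos_le hA.le hAB ?_ (by nlinarith [pi_pos])
    exact hβπ ▸ mul_le_mul_of_nonneg_right hβγ pi_pos.le
end

section
/- Let α ∈ (0,2)∖{1}, and let D₋, D₊, I₋, I₊ be linear endomorphisms of a vector space V satisfying D₋∘I₋ = id, D₊∘I₊ = id, D₋∘I₊ + D₊∘I₋ = 2cos(απ)·id, and all four operators pairwise commute. Let M₋, M₊ ∈ ℝ not both zero, set M = M₋² + M₊² + 2M₋M₊cos(απ) and K± = M±/M. Then (K₋I₋ + K₊I₊)∘(M₋D₋ + M₊D₊) = id and (M₋D₋ + M₊D₊)∘(K₋I₋ + K₊I₊) = id. -/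
/-!
With `c = cos (α π)`, the relations say that `M₋ D₋ + M₊ D₊` times `M₋ I₋ + M₊ I₊` is
`M₋² + M₊² + 2 M₋ M₊ c = M`, a positive definite quadratic form in `(M₋, M₊)` because `|c| < 1`
for non-integral `α`. Dividing by `M` gives a right inverse, and commutativity makes it two-sided.
-/

open Real

lemma cos_sq_mul_pi_lt_one {α : ℝ} (hα : ∀ n : ℤ, α ≠ n) : cos (α * π) ^ 2 < 1 := by
  have hsin : sin (α * π) ≠ 0 := by
    rw [Ne, sin_eq_zero_iff]
    rintro ⟨n, hn⟩
    exact hα n (mul_right_cancel₀ pi_ne_zero hn).symm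
  nlinarith [sin_sq_add_cos_sq (α * π), sq_pos_of_ne_zero hsin]

-- The form equals `(a + b c)² + b² (1 - c²)`.
lemma sq_add_sq_add_two_mul_mul_mul_pos {a b c : ℝ} (hc : c ^ 2 < 1) (hab : ¬(a = 0 ∧ b = 0)) :
    0 < a ^ 2 + b ^ 2 + 2 * a * b * c := by
  by_cases hb : b = 0
  · have ha : a ≠ 0 := fun ha => hab ⟨ha, hb⟩
    subst hb
    simpa using sq_pos_of_ne_zero ha
  · nlinarith [sq_nonneg (a + b * c), mul_pos (sq_pos_of_ne_zero hb) (sub_pos.2 hc)]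

lemma smul_add_smul_mul_div_smul_add_div_smul_eq_one {k A : Type*} [Field k] [Ring A]
    [Algebra k A] {dm dp im ip : A} {c : k} (hm : dm * im = 1) (hp : dp * ip = 1)
    (hcross : dm * ip + dp * im = (2 * c) • 1) {a b M : k}
    (hM : M = a ^ 2 + b ^ 2 + 2 * a * b * c) (hM0 : M ≠ 0) :
    (a • dm + b • dp) * ((a / M) • im + (b / M) • ip) = 1 := by
  have hexpand : (a • dm + b • dp) * ((a / M) • im + (b / M) • ip)
      = (a * (a / M)) • (dm * im) + (b * (b / M)) • (dp * ip)
        + (a * b / M) • (dm * ip + dp * im) := by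
    simp only [add_mul, mul_add, smul_mul_smul_comm, smul_add]
    rw [show b * (a / M) = a * b / M by ring, show a * (b / M) = a * b / M by ring]
    abel
  rw [hexpand, hm, hp, hcross, smul_smul, ← add_smul, ← add_smul]
  convert one_smul k (1 : A)
  field_simp
  rw [hM]
  ring

theorem stmt_15_general (α : ℝ) (hα0 : 0 < α) (hα2 : α < 2) (hα1 : α ≠ 1)
    (V : Type*) [AddCommGroup V] [Module ℝ V]
    (Dm Dp Im Ip : V →ₗ[ℝ] V)
    (h1 : Dm ∘ₗ Im = LinearMap.id)
    (h2 : Dp ∘ₗ Ip = LinearMap.id)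
    (h3 : Dm ∘ₗ Ip + Dp ∘ₗ Im = (2 * Real.cos (α * Real.pi)) • LinearMap.id)
    (hc2 : Dm ∘ₗ Im = Im ∘ₗ Dm)
    (hc3 : Dm ∘ₗ Ip = Ip ∘ₗ Dm) (hc4 : Dp ∘ₗ Im = Im ∘ₗ Dp)
    (hc5 : Dp ∘ₗ Ip = Ip ∘ₗ Dp)
    (Mm Mp : ℝ) (hM : ¬(Mm = 0 ∧ Mp = 0))
    (M Km Kp : ℝ)
    (hMdef : M = Mm ^ 2 + Mp ^ 2 + 2 * Mm * Mp * Real.cos (α * Real.pi))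
    (hKm : Km = Mm / M) (hKp : Kp = Mp / M) :
    (Km • Im + Kp • Ip) ∘ₗ (Mm • Dm + Mp • Dp) = LinearMap.id ∧
      (Mm • Dm + Mp • Dp) ∘ₗ (Km • Im + Kp • Ip) = LinearMap.id := by
  subst hKm hKp
  have hα : ∀ n : ℤ, α ≠ n := by
    rintro n rfl
    have h0 : 0 < n := by exact_mod_cast hα0
    have h2 : n < 2 := by exact_mod_cast hα2
    exact hα1 (by simp [show n = 1 by omega])
  have hM0 : M ≠ 0 := hMdef ▸ (sq_add_sq_add_two_mul_mul_mul_pos (cos_sq_mul_pi_lt_one hα) hM).ne'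
  have hright : (Mm • Dm + Mp • Dp) * ((Mm / M) • Im + (Mp / M) • Ip) = 1 :=
    smul_add_smul_mul_div_smul_add_div_smul_eq_one h1 h2 h3 hMdef hM0
  have hcomm : Commute (Mm • Dm + Mp • Dp) ((Mm / M) • Im + (Mp / M) • Ip) := by
    refine .add_left (.add_right ?_ ?_) (.add_right ?_ ?_) <;> refine .smul_left (.smul_right ?_ _) _
    exacts [hc2, hc3, hc4, hc5]
  exact ⟨hcomm.eq.symm.trans hright, hright⟩

theorem stmt_15 (α : ℝ) (hα0 : 0 < α) (hα2 : α < 2) (hα1 : α ≠ 1)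
    (V : Type*) [AddCommGroup V] [Module ℝ V]
    (Dm Dp Im Ip : V →ₗ[ℝ] V)
    (h1 : Dm ∘ₗ Im = LinearMap.id)
    (h2 : Dp ∘ₗ Ip = LinearMap.id)
    (h3 : Dm ∘ₗ Ip + Dp ∘ₗ Im = (2 * Real.cos (α * Real.pi)) • LinearMap.id)
    (hc1 : Dm ∘ₗ Dp = Dp ∘ₗ Dm) (hc2 : Dm ∘ₗ Im = Im ∘ₗ Dm)
    (hc3 : Dm ∘ₗ Ip = Ip ∘ₗ Dm) (hc4 : Dp ∘ₗ Im = Im ∘ₗ Dp)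
    (hc5 : Dp ∘ₗ Ip = Ip ∘ₗ Dp) (hc6 : Im ∘ₗ Ip = Ip ∘ₗ Im)
    (Mm Mp : ℝ) (hM : ¬(Mm = 0 ∧ Mp = 0))
    (M Km Kp : ℝ)
    (hMdef : M = Mm ^ 2 + Mp ^ 2 + 2 * Mm * Mp * Real.cos (α * Real.pi))
    (hKm : Km = Mm / M) (hKp : Kp = Mp / M) :
    (Km • Im + Kp • Ip) ∘ₗ (Mm • Dm + Mp • Dp) = LinearMap.id ∧
      (Mm • Dm + Mp • Dp) ∘ₗ (Km • Im + Kp • Ip) = LinearMap.id :=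
  stmt_15_general α hα0 hα2 hα1 V Dm Dp Im Ip h1 h2 h3 hc2 hc3 hc4 hc5 Mm Mp hM M Km Kp hMdef hKm
    hKp
end
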